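/- Suppose μ ≥ 4λ/(1−λ). Then for every d with 0 < d ≤ (1−λ)²v_max²/(4ML), it holds that (μ/(2λ·v_max))·d ≥ h'(d). -/
import Mathlib


/-- The function h'(d) from Proposition 6.2. -/
noncomputable def hLow (lam vmax M L d : ℝ) : ℝ :=
  ((1 - lam) * vmax - Real.sqrt ((1 - lam) ^ 2 * vmax ^ 2 - 4 * M * L * d)) / (2 * M * L)

theorem stmt_10 (vmax M L lam : ℝ) (hv : 0 < vmax) (hM : 0 < M) (hL : 0 < L)
    (hlam : lam ∈ Set.Ioo (0:ℝ) 1) (μ : ℝ) (hμ : 4 * lam / (1 - lam) ≤ μ) :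
    ∀ d : ℝ, 0 < d → d ≤ (1 - lam) ^ 2 * vmax ^ 2 / (4 * M * L) →
      hLow lam vmax M L d ≤ (μ / (2 * lam * vmax)) * d := by
  obtain ⟨hl0, hl1⟩ := hlam
  intro d hd hdle
  have h1l : (0:ℝ) < 1 - lam := by linarith
  set a := (1 - lam) * vmax with ha
  have hapos : 0 < a := mul_pos h1l hv
  have hML : (0:ℝ) < 2 * M * L := by positivity
  have harg : 0 ≤ (1 - lam) ^ 2 * vmax ^ 2 - 4 * M * L * d := by
    have := (div_le_div_iff₀ (by positivity) (by positivity)).mp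
      (le_of_eq (rfl : (1 - lam) ^ 2 * vmax ^ 2 / (4 * M * L) = _))
    have h4 : (0:ℝ) < 4 * M * L := by positivity
    have := (le_div_iff₀ h4).mp hdle
    linarith [mul_le_mul_of_nonneg_right hdle (le_of_lt h4)]
  set s := Real.sqrt ((1 - lam) ^ 2 * vmax ^ 2 - 4 * M * L * d) with hs
  have hs0 : 0 ≤ s := Real.sqrt_nonneg _
  have hsq : s ^ 2 = (1 - lam) ^ 2 * vmax ^ 2 - 4 * M * L * d := Real.sq_sqrt harg
  have hsa : s ≤ a := by
    nlinarith [sq_nonneg (s - a), sq_nonneg (s + a)]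
  have hμa : 4 * lam ≤ μ * (1 - lam) := by
    have := (div_le_iff₀ h1l).mp hμ
    linarith
  have hμ0 : 0 < μ := by nlinarith
  -- key: (a - s) * a ≤ (a - s) * (a + s) = 4 M L d
  have hkey : (a - s) * a ≤ 4 * M * L * d := by
    nlinarith [mul_nonneg (sub_nonneg.mpr hsa) hs0]
  rw [hLow]
  rw [div_le_iff₀ hML]
  have h2lv : (0:ℝ) < 2 * lam * vmax := by positivity
  have hgoal : (a - s) ≤ μ / (2 * lam * vmax) * d * (2 * M * L) := by
    rw [div_mul_eq_mul_div, div_mul_eq_mul_div, le_div_iff₀ h2lv]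
    -- (a - s) * (2 λ v) ≤ μ * d * (2 M L)
    -- from hkey: (a-s) ≤ 4MLd/a, and μ ≥ 4λ/(1-λ) so μ * a ≥ 4 λ v
    have h1 : (a - s) * (2 * lam * vmax) * a ≤ 4 * M * L * d * (2 * lam * vmax) := by
      nlinarith [h2lv]
    have h2 : 4 * M * L * d * (2 * lam * vmax) ≤ μ * d * (2 * M * L) * a := by
      have : 4 * lam * vmax ≤ μ * a := by nlinarith
      nlinarith [mul_le_mul_of_nonneg_left this (by positivity : (0:ℝ) ≤ 2 * M * L * d)]
    nlinarith [mul_pos hapos h2lv]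
  calc (1 - lam) * vmax - s = a - s := by rw [ha]
    _ ≤ _ := hgoal
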